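/- arXiv:2505.00793 — 4 statements merged into one kernel-verified Lean document; each statement's English description precedes it below -/
import Mathlib

section
/- Let P, O, M be natural numbers. Let L : ℝ^P × ℝ^M → ℝ be twice continuously differentiable (ContDiff ℝ 2), and define the inner-gradient map g : ℝ^P × ℝ^M → ℝ^P by g (θ', η') = gradient (fun t => L (t, η')) θ'. Let θ : ℝ^M → ℝ^P and υ : ℝ^M → ℝ^O be differentiable at η, and let Υ : ℝ^P × ℝ^P × ℝ^O × ℝ^M → ℝ^P × ℝ^O be differentiable at the point z := (g (θ η, η), θ η, υ η, η). Then the reparameterised one-step update map Φ : η' ↦ Υ (g (θ η', η'), θ η', υ η', η') is differentiable at η, and its Fréchet derivative at η equals D₁ ∘ (H ∘ Dθ + X) + D₂ ∘ Dθ + D₃ ∘ Dυ + D₄, where Dθ = fderiv ℝ θ η, Dυ = fderiv ℝ υ η, D_k is the partial Fréchet derivative of Υ at z with respect to its k-th argument (the composition of fderiv ℝ Υ z with the continuous linear inclusion of the k-th factor), H = fderiv ℝ (fun t => g (t, η)) (θ η) is the Hessian ∂²L/∂θ² at (θ η, η), and X = fderiv ℝ (fun η' => g (θ η, η')) η is the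 mixed second derivative ∂²L/∂η∂θ at (θ η, η). -/
/-!
The update map is `Υ` composed with `η' ↦ (g (θ η', η'), θ η', υ η', η')`, so the formula is the
chain rule twice over. The Riesz isomorphism turns the `C²` hypothesis on `L` into `C¹` of the
inner-gradient map `g`, so `g` has a total derivative at `(θ η, η)`; its restrictions to the two
factors are `H` and `X`, and differentiating `η' ↦ g (θ η', η')` gives `H ∘ Dθ + X`. Splitting the
derivative of `Υ` along the four factors of its domain yields the four partial derivatives `D_k`.
-/

open InnerProductSpace

namespace ContinuousLinearMap

variable {R M M₁ M₂ N : Type*} [Semiring R] [TopologicalSpace M] [AddCommMonoid M] [Module R M]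
  [TopologicalSpace M₁] [AddCommMonoid M₁] [Module R M₁]
  [TopologicalSpace M₂] [AddCommMonoid M₂] [Module R M₂]
  [TopologicalSpace N] [AddCommMonoid N] [Module R N] [ContinuousAdd M]

theorem comp_prod_eq_add (f : M₁ × M₂ →L[R] M) (a : N →L[R] M₁) (b : N →L[R] M₂) :
    f.comp (a.prod b) = (f.comp (inl R M₁ M₂)).comp a + (f.comp (inr R M₁ M₂)).comp b := by
  ext v
  simp [← map_add]

end ContinuousLinearMap

section Partial

variable {𝕜 E F G : Type*} [NontriviallyNormedField 𝕜]
  [NormedAddCommGroup E] [NormedSpace 𝕜 E] [NormedAddCommGroup F] [NormedSpace 𝕜 F]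
  [NormedAddCommGroup G] [NormedSpace 𝕜 G] {f : E × F → G} {f' : E × F →L[𝕜] G}

theorem HasFDerivAt.comp_prodMk_left {x : E} {y : F} (hf : HasFDerivAt f f' (x, y)) :
    HasFDerivAt (fun t => f (t, y)) (f'.comp (.inl 𝕜 E F)) x :=
  hf.comp x (hasFDerivAt_prodMk_left x y)

theorem HasFDerivAt.comp_prodMk_right {x : E} {y : F} (hf : HasFDerivAt f f' (x, y)) :
    HasFDerivAt (fun s => f (x, s)) (f'.comp (.inr 𝕜 E F)) y :=
  hf.comp y (hasFDerivAt_prodMk_right x y)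

theorem DifferentiableAt.hasFDerivAt_comp_prodMk_self {u : F → E} {u' : F →L[𝕜] E} {y : F}
    (hf : DifferentiableAt 𝕜 f (u y, y)) (hu : HasFDerivAt u u' y) :
    HasFDerivAt (fun s => f (u s, s))
      ((fderiv 𝕜 (fun t => f (t, y)) (u y)).comp u' + fderiv 𝕜 (fun s => f (u y, s)) y) y := by
  have hcomp := hf.hasFDerivAt.comp (f := fun s => (u s, s)) y (hu.prodMk (hasFDerivAt_id y))
  rwa [ContinuousLinearMap.comp_prod_eq_add, ContinuousLinearMap.comp_id,
    ← hf.hasFDerivAt.comp_prodMk_left.fderiv, ← hf.hasFDerivAt.comp_prodMk_right.fderiv] at hcomp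

end Partial

section PartialGradient

variable {E F : Type*} [NormedAddCommGroup E] [InnerProductSpace ℝ E] [CompleteSpace E]
  [NormedAddCommGroup F] [NormedSpace ℝ F] {L : E × F → ℝ}

theorem gradient_comp_prodMk_left {x : E} {y : F} (hL : DifferentiableAt ℝ L (x, y)) :
    gradient (fun t => L (t, y)) x = (toDual ℝ E).symm ((fderiv ℝ L (x, y)).comp (.inl ℝ E F)) := by
  rw [gradient, hL.hasFDerivAt.comp_prodMk_left.fderiv]

theorem ContDiff.gradient_comp_prodMk_left {n : WithTop ℕ∞} (hL : ContDiff ℝ (n + 1) L) :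
    ContDiff ℝ n (fun p : E × F => gradient (fun t => L (t, p.2)) p.1) := by
  have hL' : Differentiable ℝ L := hL.differentiable (by simp)
  simp_rw [_root_.gradient_comp_prodMk_left (hL' _)]
  refine (toDual ℝ E).symm.contDiff.comp ?_
  exact ((ContinuousLinearMap.compL ℝ E (E × F) ℝ).flip (.inl ℝ E F)).contDiff.comp
    (hL.fderiv_right le_rfl)

end PartialGradient

/-- Equation (5) of the paper: one-step recurrence for the total
derivative of the reparameterised inner update `Υ(∇L, θ, υ, η)` with respect
to the meta-parameters. With `g (θ', η') := ∇_θ L(θ', η')` the inner-gradient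
map, `z := (g (θ η, η), θ η, υ η, η)`, `D_k` the partial Fréchet derivative of
`Υ` at `z` in its `k`-th argument, `H := ∂²L/∂θ²` and `X := ∂²L/∂η∂θ` at
`(θ η, η)`, the map `Φ : η' ↦ Υ (g (θ η', η'), θ η', υ η', η')` is
differentiable at `η` with
`dΦ/dη = D₁ ∘ (H ∘ dθ/dη + X) + D₂ ∘ dθ/dη + D₃ ∘ dυ/dη + D₄`. -/
theorem stmt1 (P O M : ℕ)
    (L : EuclideanSpace ℝ (Fin P) × EuclideanSpace ℝ (Fin M) → ℝ)
    (hL : ContDiff ℝ 2 L)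
    (g : EuclideanSpace ℝ (Fin P) × EuclideanSpace ℝ (Fin M) → EuclideanSpace ℝ (Fin P))
    (hg : ∀ θ' η', g (θ', η') = gradient (fun t => L (t, η')) θ')
    (θ : EuclideanSpace ℝ (Fin M) → EuclideanSpace ℝ (Fin P))
    (υ : EuclideanSpace ℝ (Fin M) → EuclideanSpace ℝ (Fin O))
    (η : EuclideanSpace ℝ (Fin M))
    (hθ : DifferentiableAt ℝ θ η)
    (hυ : DifferentiableAt ℝ υ η)
    (Υ : EuclideanSpace ℝ (Fin P) × EuclideanSpace ℝ (Fin P) × EuclideanSpace ℝ (Fin O) ×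
          EuclideanSpace ℝ (Fin M) →
        EuclideanSpace ℝ (Fin P) × EuclideanSpace ℝ (Fin O))
    (z : EuclideanSpace ℝ (Fin P) × EuclideanSpace ℝ (Fin P) × EuclideanSpace ℝ (Fin O) ×
          EuclideanSpace ℝ (Fin M))
    (hz : z = (g (θ η, η), θ η, υ η, η))
    (hΥ : DifferentiableAt ℝ Υ z) :
    DifferentiableAt ℝ (fun η' => Υ (g (θ η', η'), θ η', υ η', η')) η ∧
    fderiv ℝ (fun η' => Υ (g (θ η', η'), θ η', υ η', η')) η =
      -- D₁ ∘ (H ∘ Dθ + X)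
      ((fderiv ℝ Υ z).comp
          (ContinuousLinearMap.inl ℝ (EuclideanSpace ℝ (Fin P))
            (EuclideanSpace ℝ (Fin P) × EuclideanSpace ℝ (Fin O) ×
              EuclideanSpace ℝ (Fin M)))).comp
        ((fderiv ℝ (fun t => g (t, η)) (θ η)).comp (fderiv ℝ θ η) +
          fderiv ℝ (fun η' => g (θ η, η')) η) +
      -- D₂ ∘ Dθ
      ((fderiv ℝ Υ z).comp
          ((ContinuousLinearMap.inr ℝ (EuclideanSpace ℝ (Fin P))
              (EuclideanSpace ℝ (Fin P) × EuclideanSpace ℝ (Fin O) ×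
                EuclideanSpace ℝ (Fin M))).comp
            (ContinuousLinearMap.inl ℝ (EuclideanSpace ℝ (Fin P))
              (EuclideanSpace ℝ (Fin O) × EuclideanSpace ℝ (Fin M))))).comp
        (fderiv ℝ θ η) +
      -- D₃ ∘ Dυ
      ((fderiv ℝ Υ z).comp
          ((ContinuousLinearMap.inr ℝ (EuclideanSpace ℝ (Fin P))
              (EuclideanSpace ℝ (Fin P) × EuclideanSpace ℝ (Fin O) ×
                EuclideanSpace ℝ (Fin M))).comp
            ((ContinuousLinearMap.inr ℝ (EuclideanSpace ℝ (Fin P))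
                (EuclideanSpace ℝ (Fin O) × EuclideanSpace ℝ (Fin M))).comp
              (ContinuousLinearMap.inl ℝ (EuclideanSpace ℝ (Fin O))
                (EuclideanSpace ℝ (Fin M)))))).comp
        (fderiv ℝ υ η) +
      -- D₄
      (fderiv ℝ Υ z).comp
        ((ContinuousLinearMap.inr ℝ (EuclideanSpace ℝ (Fin P))
            (EuclideanSpace ℝ (Fin P) × EuclideanSpace ℝ (Fin O) ×
              EuclideanSpace ℝ (Fin M))).comp
          ((ContinuousLinearMap.inr ℝ (EuclideanSpace ℝ (Fin P))
              (EuclideanSpace ℝ (Fin O) × EuclideanSpace ℝ (Fin M))).comp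
            (ContinuousLinearMap.inr ℝ (EuclideanSpace ℝ (Fin O))
              (EuclideanSpace ℝ (Fin M))))) := by
  subst hz
  have hgC : ContDiff ℝ 1 g := by
    have hgeq : g = fun p => gradient (fun t => L (t, p.2)) p.1 := funext fun p => hg p.1 p.2
    exact hgeq ▸ ContDiff.gradient_comp_prodMk_left (n := 1) hL
  have hG := (hgC.differentiable one_ne_zero (θ η, η)).hasFDerivAt_comp_prodMk_self hθ.hasFDerivAt
  have hΦ : HasFDerivAt (fun η' => Υ (g (θ η', η'), θ η', υ η', η')) _ η := hΥ.hasFDerivAt.comp η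
    (hG.prodMk (hθ.hasFDerivAt.prodMk (hυ.hasFDerivAt.prodMk (hasFDerivAt_id η))))
  refine ⟨hΦ.differentiableAt, ?_⟩
  rw [hΦ.fderiv]
  simp only [ContinuousLinearMap.comp_prod_eq_add, ContinuousLinearMap.comp_assoc,
    ContinuousLinearMap.comp_add, ContinuousLinearMap.comp_id, add_assoc]
end

section
/- Let f : ℝ^n → ℝ be twice continuously differentiable (ContDiff ℝ 2). Then for every x, u, v ∈ ℝ^n, fderiv ℝ (fun y => fderiv ℝ f y v) x u = ⟪fderiv ℝ (gradient f) x v, u⟫. That is, the reverse-over-forward Hessian-vector product (the derivative at x in direction u of the scalar map y ↦ Df(y)[v]) coincides with the forward-over-reverse Hessian-vector product (the directional derivative of the gradient field in direction v, paired with u); all computationally tractable autodiff modes compute the same Hessian-by-vector product ∂²f/∂x² v. -/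
open scoped RealInnerProductSpace

/-!
The gradient is the Riesz isomorphism applied to `fderiv ℝ f`, and that isomorphism is a
continuous linear map, so `⟪D(∇f)(x) v, u⟫ = D²f(x) v u`. Differentiating `y ↦ Df(y) v`
gives `D²f(x) u v` instead, and the two agree by Schwarz's theorem.
-/

section

variable {𝕜 E F : Type*} [NontriviallyNormedField 𝕜] [NormedAddCommGroup E] [NormedSpace 𝕜 E]
  [NormedAddCommGroup F] [NormedSpace 𝕜 F] {f : E → F} {x : E}

theorem fderiv_fderiv_apply_const (hf : DifferentiableAt 𝕜 (fderiv 𝕜 f) x) (u v : E) :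
    fderiv 𝕜 (fun y => fderiv 𝕜 f y v) x u = fderiv 𝕜 (fderiv 𝕜 f) x u v := by
  simp [fderiv_clm_apply hf (differentiableAt_const v)]

end

section

open InnerProductSpace

variable {E : Type*} [NormedAddCommGroup E] [InnerProductSpace ℝ E] [CompleteSpace E]
  {f : E → ℝ} {x : E}

theorem fderiv_gradient (hf : DifferentiableAt ℝ (fderiv ℝ f) x) :
    fderiv ℝ (gradient f) x =
      (toDual ℝ E).symm.toLinearIsometry.toContinuousLinearMap ∘L fderiv ℝ (fderiv ℝ f) x :=
  ((toDual ℝ E).symm.toLinearIsometry.toContinuousLinearMap.hasFDerivAt.comp x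
    hf.hasFDerivAt).fderiv

theorem inner_fderiv_gradient_apply (hf : DifferentiableAt ℝ (fderiv ℝ f) x) (u v : E) :
    ⟪fderiv ℝ (gradient f) x v, u⟫ = fderiv ℝ (fderiv ℝ f) x v u := by
  simp [fderiv_gradient hf]

end

/-- for twice continuously differentiable `f : ℝ^n → ℝ`, the
reverse-over-forward Hessian-vector product (the derivative at `x` in
direction `u` of the scalar map `y ↦ Df(y)[v]`) coincides with the
forward-over-reverse Hessian-vector product (the directional derivative of the
gradient field in direction `v`, paired with `u`): all computationally
tractable autodiff modes compute the same Hessian-by-vector product. -/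
theorem stmt6 (n : ℕ) (f : EuclideanSpace ℝ (Fin n) → ℝ) (hf : ContDiff ℝ 2 f)
    (x u v : EuclideanSpace ℝ (Fin n)) :
    fderiv ℝ (fun y => fderiv ℝ f y v) x u = ⟪fderiv ℝ (gradient f) x v, u⟫ := by
  have hf' : DifferentiableAt ℝ (fderiv ℝ f) x :=
    (hf.fderiv_right (m := 1) le_rfl).differentiable one_ne_zero x
  rw [fderiv_fderiv_apply_const hf', inner_fderiv_gradient_apply hf']
  exact hf.contDiffAt.isSymmSndFDerivAt (by simp [minSmoothness_of_isRCLikeNormedField]) u v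
end

section
/- Let Φ : ℝ^P × ℝ^M → ℝ^P be continuously differentiable (ContDiff ℝ 1) and let θ₀ ∈ ℝ^P. For each η ∈ ℝ^M define the unrolled iterates by θ_0(η) = θ₀ and θ_{i+1}(η) = Φ (θ_i(η), η). Fix η and write A_i := fderiv ℝ (fun t => Φ (t, η)) (θ_i(η)) and B_i := fderiv ℝ (fun η' => Φ (θ_i(η), η')) η for the partial Fréchet derivatives of Φ at the i-th iterate. Then for every T, the map η' ↦ θ_T(η') is differentiable at η and fderiv ℝ (fun η' => θ_T(η')) η = ∑_{i=0}^{T-1} (A_{T-1} ∘ A_{T-2} ∘ ⋯ ∘ A_{i+1}) ∘ B_i, where the composition A_{T-1} ∘ ⋯ ∘ A_{i+1} is the identity when i = T-1. -/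
/-- `chainComp A i j` is the ordered composition `A (j-1) ∘ A (j-2) ∘ ⋯ ∘ A i`
of continuous linear maps, equal to the identity when `j ≤ i`. -/
noncomputable def chainComp {F : Type*} [NormedAddCommGroup F] [NormedSpace ℝ F]
    (A : ℕ → (F →L[ℝ] F)) (i : ℕ) : ℕ → (F →L[ℝ] F)
  | 0 => ContinuousLinearMap.id ℝ F
  | (j + 1) =>
      if j + 1 ≤ i then ContinuousLinearMap.id ℝ F
      else (A j).comp (chainComp A i j)

/-!
By the chain rule, `D_{T+1} = A_T ∘ D_T + B_T` for `D_T := fderiv θ_T η`, with `D_0 = 0` since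
`θ_0` is constant. This linear recursion is solved by the discrete variation-of-constants
formula `D_T = ∑_{i<T} (A_{T-1} ∘ ⋯ ∘ A_{i+1}) ∘ B_i`.
-/

section ChainComp

variable {F G : Type*} [NormedAddCommGroup F] [NormedSpace ℝ F]
  [NormedAddCommGroup G] [NormedSpace ℝ G] (A : ℕ → F →L[ℝ] F)

theorem chainComp_of_le {i j : ℕ} (h : j ≤ i) :
    chainComp A i j = ContinuousLinearMap.id ℝ F := by
  cases j <;> simp [chainComp, h]

theorem chainComp_succ {i j : ℕ} (h : i ≤ j) :
    chainComp A i (j + 1) = (A j).comp (chainComp A i j) := by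
  simp [chainComp, show ¬ j + 1 ≤ i by omega]

theorem sum_range_succ_chainComp_comp (B : ℕ → G →L[ℝ] F) (T : ℕ) :
    ∑ i ∈ Finset.range (T + 1), (chainComp A (i + 1) (T + 1)).comp (B i) =
      (A T).comp (∑ i ∈ Finset.range T, (chainComp A (i + 1) T).comp (B i)) + B T := by
  rw [Finset.sum_range_succ, chainComp_of_le A le_rfl, ContinuousLinearMap.id_comp,
    ContinuousLinearMap.comp_finsetSum]
  congr 1
  refine Finset.sum_congr rfl fun i hi => ?_
  rw [chainComp_succ A (Finset.mem_range.mp hi), ContinuousLinearMap.comp_assoc]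

end ChainComp

section Unrolling

variable {E F : Type*} [NormedAddCommGroup E] [NormedSpace ℝ E]
  [NormedAddCommGroup F] [NormedSpace ℝ F]

theorem hasFDerivAt_comp_prodMk_self {Φ : E × F → E} {g : F → E} {g' : F →L[ℝ] E} {y : F}
    (hΦ : DifferentiableAt ℝ Φ (g y, y)) (hg : HasFDerivAt g g' y) :
    HasFDerivAt (fun y' => Φ (g y', y'))
      ((fderiv ℝ (fun x => Φ (x, y)) (g y)).comp g' + fderiv ℝ (fun y' => Φ (g y, y')) y) y := by
  have hΦ' := hΦ.hasFDerivAt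
  have hA : fderiv ℝ (fun x => Φ (x, y)) (g y) = (fderiv ℝ Φ (g y, y)).comp (.inl ℝ E F) :=
    (hΦ'.comp (g y) (hasFDerivAt_prodMk_left (g y) y)).fderiv
  have hB : fderiv ℝ (fun y' => Φ (g y, y')) y = (fderiv ℝ Φ (g y, y)).comp (.inr ℝ E F) :=
    (hΦ'.comp y (hasFDerivAt_prodMk_right (g y) y)).fderiv
  rw [hA, hB]
  have hpair : HasFDerivAt (fun y' => (g y', y')) (g'.prod (.id ℝ F)) y :=
    hg.prodMk (hasFDerivAt_id y)
  refine (HasFDerivAt.comp (f := fun y' => (g y', y')) y hΦ' hpair).congr_fderiv ?_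
  ext v
  simp [← map_add]

theorem hasFDerivAt_unrolled {Φ : E × F → E} (hΦ : Differentiable ℝ Φ) {θ₀ : E}
    {θ : ℕ → F → E} (hθ0 : ∀ η, θ 0 η = θ₀) (hθs : ∀ i η, θ (i + 1) η = Φ (θ i η, η))
    (η : F) (T : ℕ) :
    HasFDerivAt (θ T)
      (∑ i ∈ Finset.range T,
        (chainComp (fun j => fderiv ℝ (fun t => Φ (t, η)) (θ j η)) (i + 1) T).comp
          (fderiv ℝ (fun η' => Φ (θ i η, η')) η)) η := by
  induction T with
  | zero =>
    rw [Finset.sum_range_zero, show θ 0 = fun _ => θ₀ from funext hθ0]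
    exact hasFDerivAt_const _ η
  | succ T ih =>
    rw [sum_range_succ_chainComp_comp, show θ (T + 1) = fun η' => Φ (θ T η', η') from
      funext (hθs T)]
    exact hasFDerivAt_comp_prodMk_self (hΦ _) ih

end Unrolling

/-- closed form of the total derivative computed by (truncated)
backpropagation through time. If `θ 0 η = θ₀` and `θ (i+1) η = Φ (θ i η, η)`,
with `A i := ∂Φ/∂θ` and `B i := ∂Φ/∂η` evaluated at the `i`-th iterate, then
`η' ↦ θ T η'` is differentiable at `η` with derivative
`∑_{i=0}^{T-1} (A_{T-1} ∘ ⋯ ∘ A_{i+1}) ∘ B_i`. -/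
theorem stmt7 (P M : ℕ)
    (Φ : EuclideanSpace ℝ (Fin P) × EuclideanSpace ℝ (Fin M) → EuclideanSpace ℝ (Fin P))
    (hΦ : ContDiff ℝ 1 Φ)
    (θ₀ : EuclideanSpace ℝ (Fin P))
    (θ : ℕ → EuclideanSpace ℝ (Fin M) → EuclideanSpace ℝ (Fin P))
    (hθ0 : ∀ η, θ 0 η = θ₀)
    (hθs : ∀ i η, θ (i + 1) η = Φ (θ i η, η))
    (η : EuclideanSpace ℝ (Fin M)) (T : ℕ) :
    DifferentiableAt ℝ (fun η' => θ T η') η ∧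
    fderiv ℝ (fun η' => θ T η') η =
      ∑ i ∈ Finset.range T,
        (chainComp (fun j => fderiv ℝ (fun t => Φ (t, η)) (θ j η)) (i + 1) T).comp
          (fderiv ℝ (fun η' => Φ (θ i η, η')) η) := by
  have h := hasFDerivAt_unrolled (hΦ.differentiable one_ne_zero) hθ0 hθs η T
  exact ⟨h.differentiableAt, h.fderiv⟩
end

section
/- Let L : ℝ^P → ℝ be twice continuously differentiable (ContDiff ℝ 2) and let α ∈ ℝ. For each η ∈ ℝ^P define the gradient-descent iterates θ_0(η) = η and θ_{i+1}(η) = θ_i(η) - α • gradient L (θ_i(η)). Fix η and write H_i := fderiv ℝ (gradient L) (θ_i(η)) for the Hessian of L at the i-th iterate. Then for every T, the map η' ↦ θ_T(η') is differentiable at η and fderiv ℝ (fun η' => θ_T(η')) η = (id - α • H_{T-1}) ∘ (id - α • H_{T-2}) ∘ ⋯ ∘ (id - α • H_0), where id is the identity continuous linear map on ℝ^P; in particular for T = 0 the derivative is the identity. -/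
theorem chainComp_zero_succ {F : Type*} [NormedAddCommGroup F] [NormedSpace ℝ F]
    (A : ℕ → (F →L[ℝ] F)) (j : ℕ) :
    chainComp A 0 (j + 1) = (A j).comp (chainComp A 0 j) := by
  simp [chainComp]

theorem ContDiff.differentiable_gradient {F : Type*} [NormedAddCommGroup F]
    [InnerProductSpace ℝ F] [CompleteSpace F] {f : F → ℝ} {n : WithTop ℕ∞}
    (hf : ContDiff ℝ n f) (hn : 2 ≤ n) : Differentiable ℝ (gradient f) :=
  (InnerProductSpace.toDual ℝ F).symm.differentiable.comp
    ((hf.fderiv_right (m := 1) (by rwa [one_add_one_eq_two])).differentiable one_ne_zero)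

section Iterates

variable {E : Type*} [NormedAddCommGroup E] [NormedSpace ℝ E]

theorem hasFDerivAt_orbit {F : E → E} {F' : E → E →L[ℝ] E} {f : ℕ → E → E}
    (hf0 : ∀ x, f 0 x = x) (hfs : ∀ i x, f (i + 1) x = F (f i x)) {x : E}
    (hF : ∀ i, HasFDerivAt F (F' (f i x)) (f i x)) (T : ℕ) :
    HasFDerivAt (f T) (chainComp (fun i => F' (f i x)) 0 T) x := by
  induction T with
  | zero =>
    rw [funext hf0]
    exact hasFDerivAt_id x
  | succ T ih =>
    rw [funext (hfs T), chainComp_zero_succ]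
    exact (hF T).comp x ih

theorem hasFDerivAt_sub_smul_self {g : E → E} {g' : E →L[ℝ] E} {x : E}
    (hg : HasFDerivAt g g' x) (α : ℝ) :
    HasFDerivAt (fun y => y - α • g y) (ContinuousLinearMap.id ℝ E - α • g') x :=
  (hasFDerivAt_id x).sub (hg.const_smul α)

end Iterates

/-- MAML setting: for inner gradient descent
`θ 0 η = η`, `θ (i+1) η = θ i η - α • ∇L(θ i η)` on a twice continuously
differentiable meta-independent loss `L`, the derivative of `η' ↦ θ T η'` at
`η` is the ordered product `(id - α•H_{T-1}) ∘ ⋯ ∘ (id - α•H_0)` of matrices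
`I - α ∂²L/∂θ²` along the trajectory, the identity when `T = 0`. -/
theorem stmt8 (P : ℕ) (L : EuclideanSpace ℝ (Fin P) → ℝ) (hL : ContDiff ℝ 2 L)
    (α : ℝ)
    (θ : ℕ → EuclideanSpace ℝ (Fin P) → EuclideanSpace ℝ (Fin P))
    (hθ0 : ∀ η, θ 0 η = η)
    (hθs : ∀ i η, θ (i + 1) η = θ i η - α • gradient L (θ i η))
    (η : EuclideanSpace ℝ (Fin P)) (T : ℕ) :
    DifferentiableAt ℝ (fun η' => θ T η') η ∧
    fderiv ℝ (fun η' => θ T η') η =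
      chainComp
        (fun i => ContinuousLinearMap.id ℝ (EuclideanSpace ℝ (Fin P)) -
          α • fderiv ℝ (gradient L) (θ i η)) 0 T := by
  have hgrad := hL.differentiable_gradient le_rfl
  have hθT := hasFDerivAt_orbit
    (F' := fun x => ContinuousLinearMap.id ℝ _ - α • fderiv ℝ (gradient L) x) (x := η) hθ0 hθs
    (fun i => hasFDerivAt_sub_smul_self (hgrad _).hasFDerivAt α) T
  exact ⟨hθT.differentiableAt, hθT.fderiv⟩
end
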